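/- Let λ̲ be an r-partition of n, let T ∈ SYT(λ̲) have the standard alphabet, and let β ∈ S_n be the alphabetizer of some λ̲-alphabet. Then β(T) is a standard r-tableau, and for every reduced word β = s_{j_1} s_{j_2} ⋯ s_{j_m}, one has (σ_{j_1} ∘ σ_{j_2} ∘ ⋯ ∘ σ_{j_m})(v_T) = v_{β(T)} in the seminormal module of shape λ̲. -/

import Mathlib

open scoped Classical

/-- The permutation `s_{i_1} s_{i_2} ⋯ s_{i_k}` determined by a list of indices. -/
def wordProd (l : List ℕ) : Equiv.Perm ℕ := (l.map fun i => Equiv.swap i (i + 1)).prod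

/-- The letters of the word index simple transpositions `s_1, …, s_{n-1}` of `S_n`. -/
def IsSnWord (n : ℕ) (l : List ℕ) : Prop := ∀ i ∈ l, 1 ≤ i ∧ i + 1 ≤ n

/-- `l` is a reduced word for `w` in `S_n`. -/
def IsReducedWord (n : ℕ) (w : Equiv.Perm ℕ) (l : List ℕ) : Prop :=
  IsSnWord n l ∧ wordProd l = w ∧
    ∀ l' : List ℕ, IsSnWord n l' → wordProd l' = w → l.length ≤ l'.length

/-- The Coxeter length of `w` in `S_n`: the minimal number of simple transpositions
in a word for `w`. -/
noncomputable def permLength (n : ℕ) (w : Equiv.Perm ℕ) : ℕ :=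
  sInf {k | ∃ l : List ℕ, IsSnWord n l ∧ l.length = k ∧ wordProd l = w}

/-- Bruhat order on `S_n`: `σ ≤ τ` iff some reduced word for `τ` contains a subword
that is a reduced word for `σ`. -/
def BruhatLE (n : ℕ) (σ τ : Equiv.Perm ℕ) : Prop :=
  ∃ lτ : List ℕ, IsReducedWord n τ lτ ∧ ∃ lσ : List ℕ, lσ.Sublist lτ ∧ IsReducedWord n σ lσ

noncomputable section

/-- An `r`-partition: an (ordered) tuple of `r` integer partitions, given as Young
diagrams. -/
structure MultiPartition (r : ℕ) where
  lam : Fin r → YoungDiagram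

namespace MultiPartition

variable {r : ℕ}

/-- The boxes of the `r`-partition: pairs (component, box of that component). -/
def cells (L : MultiPartition r) : Finset (Fin r × ℕ × ℕ) :=
  Finset.univ.biUnion fun k => ((L.lam k).cells).image fun b => (k, b)

/-- The total number `n` of boxes. -/
def nb (L : MultiPartition r) : ℕ := L.cells.card

/-- `f` is a filling of the `r`-partition with `1, …, n`, each appearing exactly once
(normalized to be `0` off the shape). -/
def IsFilling (L : MultiPartition r) (f : (Fin r × ℕ × ℕ) → ℕ) : Prop :=
  Set.BijOn f (↑L.cells) (↑(Finset.Icc 1 L.nb)) ∧ ∀ b, b ∉ L.cells → f b = 0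

/-- Entries increase left to right along rows and top to bottom down columns, within
every component. -/
def IsRowColStrict (L : MultiPartition r) (f : (Fin r × ℕ × ℕ) → ℕ) : Prop :=
  (∀ (k : Fin r) (x y : ℕ), (k, (x, y)) ∈ L.cells → (k, (x, y + 1)) ∈ L.cells →
      f (k, (x, y)) < f (k, (x, y + 1))) ∧
  (∀ (k : Fin r) (x y : ℕ), (k, (x, y)) ∈ L.cells → (k, (x + 1, y)) ∈ L.cells →
      f (k, (x, y)) < f (k, (x + 1, y)))

/-- The set of standard `r`-tableaux of shape `λ̲`. -/
def SYT (L : MultiPartition r) : Set ((Fin r × ℕ × ℕ) → ℕ) :=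
  {f | L.IsFilling f ∧ L.IsRowColStrict f}

/-- Standard `r`-tableaux as a type. -/
def SYTt (L : MultiPartition r) : Type := {f : (Fin r × ℕ × ℕ) → ℕ // f ∈ L.SYT}

/-- The box of the `r`-tableau `f` containing the entry `i`. -/
def boxOf [NeZero r] (L : MultiPartition r) (f : (Fin r × ℕ × ℕ) → ℕ) (i : ℕ) :
    Fin r × ℕ × ℕ :=
  Function.invFunOn f (↑L.cells) i

end MultiPartition

/-- Exchange the entries `i` and `i+1` in a filling of an `r`-partition. -/
def sApplyR {r : ℕ} (i : ℕ) (f : (Fin r × ℕ × ℕ) → ℕ) : (Fin r × ℕ × ℕ) → ℕ :=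
  fun b => Equiv.swap i (i + 1) (f b)

/-- Column-reading order on the boxes of an `r`-partition: components left to right,
then columns left to right, then rows top to bottom. -/
def colLtR {r : ℕ} (b b' : Fin r × ℕ × ℕ) : Prop :=
  b.1 < b'.1 ∨ (b.1 = b'.1 ∧ (b.2.2 < b'.2.2 ∨ (b.2.2 = b'.2.2 ∧ b.2.1 < b'.2.1)))

namespace MultiPartition

variable {r : ℕ}

/-- The column reading `r`-tableau `C`: enter `1, …, n` consecutively down the columns,
filling the columns from left to right within each component and the components from
left to right. -/
def colReading (L : MultiPartition r) : (Fin r × ℕ × ℕ) → ℕ :=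
  fun b => if b ∈ L.cells then 1 + (L.cells.filter fun b' => colLtR b' b).card else 0

/-- The seminormal basis vector `v_f` (or `0` if `f` is not standard). -/
def vOf (L : MultiPartition r) (f : (Fin r × ℕ × ℕ) → ℕ) : L.SYTt →₀ ℂ :=
  if h : f ∈ L.SYT then Finsupp.single ⟨f, h⟩ 1 else 0

/-- `w` is the word `w_f` of the `r`-tableau `f`: `w(C) = f`, with `w` fixing everything
outside `{1, …, n}`. -/
def IsWordOf (L : MultiPartition r) (f : (Fin r × ℕ × ℕ) → ℕ) (w : Equiv.Perm ℕ) : Prop :=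
  (∀ b ∈ L.cells, w (L.colReading b) = f b) ∧ ∀ m, m ∉ Finset.Icc 1 L.nb → w m = m

/-- Bruhat order on standard `r`-tableaux: `S ≤ T` iff `w_S ≤ w_T` in Bruhat order. -/
def tabLE (L : MultiPartition r) (f g : (Fin r × ℕ × ℕ) → ℕ) : Prop :=
  ∃ wf wg : Equiv.Perm ℕ, L.IsWordOf f wf ∧ L.IsWordOf g wg ∧ BruhatLE L.nb wf wg

/-- `(f, [i_1, …, i_k])` is a path in the weak Bruhat graph on `SYT(λ̲)`. -/
def IsPath (L : MultiPartition r) : ((Fin r × ℕ × ℕ) → ℕ) → List ℕ → Prop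
  | f, [] => f ∈ L.SYT
  | f, i :: is => f ∈ L.SYT ∧ L.IsPath (sApplyR i f) is

/-- Subpaths of a path in the weak Bruhat graph on `SYT(λ̲)`. -/
def IsSubpath (L : MultiPartition r) : ((Fin r × ℕ × ℕ) → ℕ) → List ℕ → List Bool → Prop
  | f, [], [] => f ∈ L.SYT
  | f, i :: is, z :: zs => f ∈ L.SYT ∧ L.IsSubpath (if z then sApplyR i f else f) is zs
  | _, _, _ => False

end MultiPartition

/-- Apply the letters of a list, left to right, to a filling of an `r`-partition. -/
def applyWordR {r : ℕ} : List ℕ → ((Fin r × ℕ × ℕ) → ℕ) → ((Fin r × ℕ × ℕ) → ℕ)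
  | [], f => f
  | i :: is, f => applyWordR is (sApplyR i f)

/-- The `r`-tableau at which a subpath terminates. -/
def subEndR {r : ℕ} : ((Fin r × ℕ × ℕ) → ℕ) → List ℕ → List Bool → ((Fin r × ℕ × ℕ) → ℕ)
  | f, [], _ => f
  | f, _ :: _, [] => f
  | f, i :: is, z :: zs => subEndR (if z then sApplyR i f else f) is zs

end

noncomputable section

namespace MultiPartition

variable {r : ℕ} [NeZero r]

/-- The coefficient `a_i(T) = 1 / (ct(T(i+1)) - ct(T(i)))`, used when `i` and `i+1` lie
in the same component of `T` (contents taken within the component). -/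
def aW (L : MultiPartition r) (f : (Fin r × ℕ × ℕ) → ℕ) (i : ℕ) : ℂ :=
  1 / ((((L.boxOf f (i + 1)).2.2 : ℤ) - ((L.boxOf f (i + 1)).2.1 : ℤ) : ℤ) -
      (((L.boxOf f i).2.2 : ℤ) - ((L.boxOf f i).2.1 : ℤ) : ℤ) : ℤ)

/-- The seminormal operator `σ_i` for the wreath product `G_{r,n} = ℤ_r ≀ S_n`:
`σ_i v_T = v_{s_i(T)}` if `i` and `i+1` lie in different components of `T`, and
`σ_i v_T = a_i(T) v_T + (1 + a_i(T)) v_{s_i(T)}` if they lie in the same component. -/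
def wreathOp (L : MultiPartition r) (i : ℕ) : (L.SYTt →₀ ℂ) →ₗ[ℂ] (L.SYTt →₀ ℂ) :=
  Finsupp.lsum ℂ fun T : L.SYTt =>
    LinearMap.toSpanSingleton ℂ _
      (if (L.boxOf T.1 i).1 = (L.boxOf T.1 (i + 1)).1 then
        L.aW T.1 i • L.vOf T.1 + (1 + L.aW T.1 i) • L.vOf (sApplyR i T.1)
      else L.vOf (sApplyR i T.1))

/-- `wreathWord L [i_1, …, i_k] = σ_{i_1} ∘ σ_{i_2} ∘ ⋯ ∘ σ_{i_k}`. -/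
def wreathWord (L : MultiPartition r) : List ℕ → ((L.SYTt →₀ ℂ) →ₗ[ℂ] (L.SYTt →₀ ℂ))
  | [] => LinearMap.id
  | i :: is => L.wreathOp i ∘ₗ L.wreathWord is

end MultiPartition

end

noncomputable section

namespace MultiPartition

variable {r : ℕ}

/-- The number of boxes `n_k` of the `k`-th component. -/
def nk (L : MultiPartition r) (k : Fin r) : ℕ := ((L.lam k).cells).card

/-- `off L k = n_1 + ⋯ + n_{k-1}`. -/
def off (L : MultiPartition r) (k : Fin r) : ℕ :=
  ∑ j ∈ Finset.univ.filter (fun j => j < k), L.nk j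

/-- The `k`-th block `{n_1 + ⋯ + n_{k-1} + 1, …, n_1 + ⋯ + n_k}` of the standard
alphabet. -/
def stdBlock (L : MultiPartition r) (k : Fin r) : Finset ℕ :=
  Finset.Ioc (L.off k) (L.off k + L.nk k)

/-- The `r`-tableau `f` has the standard alphabet: the entries of the `k`-th component
form the `k`-th block of the standard alphabet. -/
def HasStdAlphabet (L : MultiPartition r) (f : (Fin r × ℕ × ℕ) → ℕ) : Prop :=
  ∀ b ∈ L.cells, f b ∈ L.stdBlock b.1

/-- `A` is a `λ̲`-alphabet: an ordered set partition of `{1, …, n}` with `|A_k| = n_k`. -/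
def IsAlphabet (L : MultiPartition r) (A : Fin r → Finset ℕ) : Prop :=
  (∀ k, (A k).card = L.nk k) ∧
  (∀ k k', k ≠ k' → Disjoint (A k) (A k')) ∧
  Finset.univ.biUnion A = Finset.Icc 1 L.nb

/-- `β` is the alphabetizer of the `λ̲`-alphabet `A`: for each `k`, `β` maps the `k`-th
block of the standard alphabet order-preservingly onto `A_k`, and fixes everything
outside `{1, …, n}`. -/
def IsAlphabetizer (L : MultiPartition r) (A : Fin r → Finset ℕ) (β : Equiv.Perm ℕ) :
    Prop :=
  (∀ m, m ∉ Finset.Icc 1 L.nb → β m = m) ∧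
  ∀ k, (∀ m ∈ L.stdBlock k, β m ∈ A k) ∧
    (∀ m m', m ∈ L.stdBlock k → m' ∈ L.stdBlock k → m < m' → β m < β m')

end MultiPartition

end

namespace AuxPerm

lemma wordProd_nil : wordProd [] = 1 := rfl

lemma wordProd_cons (i : ℕ) (l : List ℕ) :
    wordProd (i :: l) = Equiv.swap i (i + 1) * wordProd l := by
  simp [wordProd]

lemma swap_succ_lt {j x y : ℕ} (hxy : x < y) (hne : ¬(x = j ∧ y = j + 1)) :
    Equiv.swap j (j + 1) x < Equiv.swap j (j + 1) y := by
  rcases eq_or_ne x j with rfl | hxj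
  · rcases eq_or_ne y (x + 1) with rfl | hy1
    · exact absurd ⟨rfl, rfl⟩ hne
    · rw [Equiv.swap_apply_left, Equiv.swap_apply_of_ne_of_ne (by omega) hy1]
      omega
  · rcases eq_or_ne x (j + 1) with rfl | hxj1
    · rw [Equiv.swap_apply_right, Equiv.swap_apply_of_ne_of_ne (by omega) (by omega)]
      omega
    · rw [Equiv.swap_apply_of_ne_of_ne hxj hxj1]
      rcases eq_or_ne y j with rfl | hyj
      · rw [Equiv.swap_apply_left]; omega
      · rcases eq_or_ne y (j + 1) with rfl | hyj1
        · rw [Equiv.swap_apply_right]; omega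
        · rw [Equiv.swap_apply_of_ne_of_ne hyj hyj1]; exact hxy

def FixOut (n : ℕ) (w : Equiv.Perm ℕ) : Prop := ∀ m, m ∉ Finset.Icc 1 n → w m = m

lemma FixOut.mem {n : ℕ} {w : Equiv.Perm ℕ} (h : FixOut n w) {m : ℕ}
    (hm : m ∈ Finset.Icc 1 n) : w m ∈ Finset.Icc 1 n := by
  by_contra hc
  have h1 : w (w m) = w m := h _ hc
  have h2 : w m = m := w.injective h1
  rw [h2] at hc; exact hc hm

lemma FixOut.inv {n : ℕ} {w : Equiv.Perm ℕ} (h : FixOut n w) : FixOut n w⁻¹ := by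
  intro m hm
  apply w.injective
  rw [Equiv.Perm.coe_inv, Equiv.apply_symm_apply, h m hm]

lemma FixOut.one {n : ℕ} : FixOut n 1 := fun m _ => rfl

lemma FixOut.swap {n j : ℕ} (hj : 1 ≤ j) (hj2 : j + 1 ≤ n) :
    FixOut n (Equiv.swap j (j + 1)) := by
  intro m hm
  simp only [Finset.mem_Icc, not_and, not_le] at hm
  exact Equiv.swap_apply_of_ne_of_ne (by omega) (by omega)

lemma FixOut.mul {n : ℕ} {u w : Equiv.Perm ℕ} (hu : FixOut n u) (hw : FixOut n w) :
    FixOut n (u * w) := by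
  intro m hm
  rw [Equiv.Perm.mul_apply, hw m hm, hu m hm]

lemma fixOut_wordProd {n : ℕ} {l : List ℕ} (h : IsSnWord n l) : FixOut n (wordProd l) := by
  induction l with
  | nil => exact FixOut.one
  | cons i l ih =>
    rw [wordProd_cons]
    exact (FixOut.swap (h i (by simp)).1 (h i (by simp)).2).mul
      (ih fun i hi => h i (by simp [hi]))

noncomputable def invSet (n : ℕ) (w : Equiv.Perm ℕ) : Finset (ℕ × ℕ) :=
  (Finset.Icc 1 n ×ˢ Finset.Icc 1 n).filter fun p => p.1 < p.2 ∧ w p.2 < w p.1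

noncomputable def invNum (n : ℕ) (w : Equiv.Perm ℕ) : ℕ := (invSet n w).card

lemma invNum_one {n : ℕ} : invNum n 1 = 0 := by
  rw [invNum, Finset.card_eq_zero, invSet, Finset.filter_eq_empty_iff]
  intro p _
  simp only [Equiv.Perm.one_apply]
  omega

lemma swap_swap_cancel {j : ℕ} (w : Equiv.Perm ℕ) :
    Equiv.swap j (j + 1) * (Equiv.swap j (j + 1) * w) = w := by
  rw [← mul_assoc, Equiv.swap_mul_self, one_mul]

lemma invNum_swap_mul {n j : ℕ} {w : Equiv.Perm ℕ} (hw : FixOut n w)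
    (hj : 1 ≤ j) (hj2 : j + 1 ≤ n) (h : w⁻¹ j < w⁻¹ (j + 1)) :
    invNum n (Equiv.swap j (j + 1) * w) = invNum n w + 1 := by
  have hjm : j ∈ Finset.Icc 1 n := by simp; omega
  have hjm1 : (j + 1) ∈ Finset.Icc 1 n := by simp; omega
  have hp : w⁻¹ j ∈ Finset.Icc 1 n := hw.inv.mem hjm
  have hq : w⁻¹ (j + 1) ∈ Finset.Icc 1 n := hw.inv.mem hjm1
  have hwp : w (w⁻¹ j) = j := w.apply_symm_apply j
  have hwq : w (w⁻¹ (j + 1)) = j + 1 := w.apply_symm_apply (j + 1)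
  have key : invSet n (Equiv.swap j (j + 1) * w) = insert (w⁻¹ j, w⁻¹ (j + 1)) (invSet n w) := by
    ext ⟨a, b⟩
    simp only [invSet, Finset.mem_filter, Finset.mem_insert, Finset.mem_product,
      Prod.mk.injEq]
    simp only [Equiv.Perm.mul_apply]
    constructor
    · rintro ⟨⟨ha, hb⟩, hab, hlt⟩
      by_cases hpq : a = w⁻¹ j ∧ b = w⁻¹ (j + 1)
      · exact Or.inl hpq
      · refine Or.inr ⟨⟨ha, hb⟩, hab, ?_⟩
        by_contra hc
        push_neg at hc
        have hne : w a ≠ w b := fun he => absurd (w.injective he) (by omega)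
        have hlt2 : w a < w b := lt_of_le_of_ne hc hne
        have : Equiv.swap j (j + 1) (w a) < Equiv.swap j (j + 1) (w b) := by
          apply swap_succ_lt hlt2
          rintro ⟨h1, h2⟩
          exact hpq ⟨by rw [← h1, Equiv.Perm.coe_inv, Equiv.symm_apply_apply], by rw [← h2, Equiv.Perm.coe_inv, Equiv.symm_apply_apply]⟩
        omega
    · rintro (⟨rfl, rfl⟩ | ⟨⟨ha, hb⟩, hab, hba⟩)
      · exact ⟨⟨hp, hq⟩, h, by rw [hwp, hwq, Equiv.swap_apply_left, Equiv.swap_apply_right]; omega⟩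
      · refine ⟨⟨ha, hb⟩, hab, ?_⟩
        apply swap_succ_lt hba
        rintro ⟨h1, h2⟩
        have hb' : b = w⁻¹ j := by rw [← h1, Equiv.Perm.coe_inv, Equiv.symm_apply_apply]
        have ha' : a = w⁻¹ (j + 1) := by rw [← h2, Equiv.Perm.coe_inv, Equiv.symm_apply_apply]
        omega
  have hnot : (w⁻¹ j, w⁻¹ (j + 1)) ∉ invSet n w := by
    simp only [invSet, Finset.mem_filter, hwp, hwq]
    omega
  rw [invNum, key, Finset.card_insert_of_notMem hnot, invNum]

lemma inv_swap_mul {j : ℕ} (w : Equiv.Perm ℕ) (m : ℕ) :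
    (Equiv.swap j (j + 1) * w)⁻¹ m = w⁻¹ (Equiv.swap j (j + 1) m) := by
  rw [mul_inv_rev, Equiv.Perm.mul_apply, Equiv.swap_inv]

lemma invNum_wordProd_le {n : ℕ} {l : List ℕ} (h : IsSnWord n l) :
    invNum n (wordProd l) ≤ l.length := by
  induction l with
  | nil => rw [wordProd_nil]; simp [invNum_one]
  | cons i l ih =>
    have hi := h i (by simp)
    have htl : IsSnWord n l := fun j hj => h j (by simp [hj])
    have hw' := fixOut_wordProd htl
    have hle := ih htl
    set w' := wordProd l with hw'def
    rw [wordProd_cons]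
    have hne : w'⁻¹ i ≠ w'⁻¹ (i + 1) := fun he => by
      have := w'⁻¹.injective he; omega
    rcases lt_or_gt_of_ne hne with hlt | hgt
    · rw [invNum_swap_mul hw' hi.1 hi.2 hlt]
      simpa using Nat.add_le_add_right hle 1
    · set w'' := Equiv.swap i (i + 1) * w' with hw''def
      have hfix'' : FixOut n w'' := (FixOut.swap hi.1 hi.2).mul hw'
      have hd : w''⁻¹ i < w''⁻¹ (i + 1) := by
        rw [hw''def, inv_swap_mul, inv_swap_mul, Equiv.swap_apply_left, Equiv.swap_apply_right]
        exact hgt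
      have := invNum_swap_mul hfix'' hi.1 hi.2 hd
      rw [swap_swap_cancel] at this
      simp only [List.length_cons]
      omega

lemma exists_descent {n : ℕ} {w : Equiv.Perm ℕ} (hw : FixOut n w) (hne : w ≠ 1) :
    ∃ j, 1 ≤ j ∧ j + 1 ≤ n ∧ w⁻¹ (j + 1) < w⁻¹ j := by
  by_contra hc
  push_neg at hc
  have hg : FixOut n w⁻¹ := hw.inv
  have hmono : ∀ j, 1 ≤ j → j + 1 ≤ n → w⁻¹ j < w⁻¹ (j + 1) := by
    intro j h1 h2
    have := hc j h1 h2
    have hne' : w⁻¹ j ≠ w⁻¹ (j + 1) := fun he => by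
      have := w⁻¹.injective he; omega
    omega
  have claim1 : ∀ m, 1 ≤ m → m ≤ n → m ≤ w⁻¹ m := by
    intro m
    induction m with
    | zero => omega
    | succ m ih =>
      intro _ hmn
      rcases Nat.eq_zero_or_pos m with rfl | hm
      · have := hg.mem (show 1 ∈ Finset.Icc 1 n by simp; omega)
        simp only [Finset.mem_Icc] at this
        simpa using this.1
      · have h1 := ih (by omega) (by omega)
        have h2 := hmono m (by omega) (by omega)
        omega
  have claim2 : ∀ d m, 1 ≤ m → m ≤ n → n ≤ m + d → w⁻¹ m ≤ m := by
    intro d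
    induction d with
    | zero =>
      intro m h1 h2 h3
      have hm : m = n := by omega
      have := hg.mem (show n ∈ Finset.Icc 1 n by simp; omega)
      simp only [Finset.mem_Icc] at this
      rw [hm]; omega
    | succ d ih =>
      intro m h1 h2 h3
      rcases Nat.lt_or_ge m n with hlt | hge
      · have h4 := ih (m + 1) (by omega) (by omega) (by omega)
        have h5 := hmono m (by omega) (by omega)
        omega
      · have hm : m = n := by omega
        have := hg.mem (show n ∈ Finset.Icc 1 n by simp; omega)
        simp only [Finset.mem_Icc] at this
        rw [hm]; omega
  apply hne
  have hinv : w⁻¹ = 1 := by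
    ext m
    by_cases hm : m ∈ Finset.Icc 1 n
    · simp only [Finset.mem_Icc] at hm
      have := claim1 m hm.1 hm.2
      have := claim2 n m hm.1 hm.2 (by omega)
      simp only [Equiv.Perm.one_apply]; omega
    · simpa using hg m hm
  rw [← inv_inv w, hinv, inv_one]

lemma exists_word_of_invNum {n : ℕ} :
    ∀ N (w : Equiv.Perm ℕ), invNum n w = N → FixOut n w →
    ∃ l, IsSnWord n l ∧ l.length = invNum n w ∧ wordProd l = w := by
  intro N
  induction N using Nat.strong_induction_on with
  | _ N ih =>
    intro w hN hw
    rcases eq_or_ne w 1 with rfl | hne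
    · exact ⟨[], fun i hi => absurd hi List.not_mem_nil,
        by simp [invNum_one], wordProd_nil⟩
    · obtain ⟨j, hj, hj2, hdesc⟩ := exists_descent hw hne
      set w' := Equiv.swap j (j + 1) * w with hw'def
      have hww' : Equiv.swap j (j + 1) * w' = w := swap_swap_cancel w
      have hd : w'⁻¹ j < w'⁻¹ (j + 1) := by
        rw [hw'def, inv_swap_mul, inv_swap_mul, Equiv.swap_apply_left, Equiv.swap_apply_right]
        exact hdesc
      have hfix' : FixOut n w' := (FixOut.swap hj hj2).mul hw
      have key : invNum n w = invNum n w' + 1 := by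
        rw [← hww']; exact invNum_swap_mul hfix' hj hj2 hd
      obtain ⟨l', hsn', hlen', hprod'⟩ := ih (invNum n w') (by omega) w' rfl hfix'
      refine ⟨j :: l', ?_, ?_, ?_⟩
      · intro i hi
        rcases List.mem_cons.mp hi with rfl | hi'
        · exact ⟨hj, hj2⟩
        · exact hsn' i hi'
      · simp only [List.length_cons]; omega
      · rw [wordProd_cons, hprod', hww']

lemma reduced_invNum {n : ℕ} {w : Equiv.Perm ℕ} {l : List ℕ} (h : IsReducedWord n w l) :
    invNum n (wordProd l) = l.length := by
  have h1 := invNum_wordProd_le h.1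
  have hfix : FixOut n w := by
    have := fixOut_wordProd h.1
    rwa [h.2.1] at this
  obtain ⟨l0, hsn0, hlen0, hprod0⟩ := exists_word_of_invNum (invNum n w) w rfl hfix
  have h2 := h.2.2 l0 hsn0 hprod0
  rw [h.2.1] at h1 ⊢
  omega

end AuxPerm

namespace AuxTab

open AuxPerm MultiPartition

variable {r : ℕ}

lemma boxOf_spec [NeZero r] (L : MultiPartition r) {f : (Fin r × ℕ × ℕ) → ℕ}
    (hf : Set.BijOn f ↑L.cells ↑(Finset.Icc 1 L.nb)) {i : ℕ}
    (hi : i ∈ Finset.Icc 1 L.nb) :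
    L.boxOf f i ∈ L.cells ∧ f (L.boxOf f i) = i := by
  have hex : ∃ b ∈ (↑L.cells : Set (Fin r × ℕ × ℕ)), f b = i := by
    obtain ⟨b, hb, hfb⟩ := hf.surjOn (Finset.mem_coe.mpr hi)
    exact ⟨b, hb, hfb⟩
  exact ⟨Finset.mem_coe.mp (Function.invFunOn_mem hex), Function.invFunOn_eq hex⟩

lemma boxOf_eq [NeZero r] (L : MultiPartition r) {f : (Fin r × ℕ × ℕ) → ℕ}
    (hf : Set.BijOn f ↑L.cells ↑(Finset.Icc 1 L.nb)) {i : ℕ} {b : Fin r × ℕ × ℕ}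
    (hb : b ∈ L.cells) (hfb : f b = i) : L.boxOf f i = b := by
  have hi : i ∈ Finset.Icc 1 L.nb := by
    have := hf.mapsTo (Finset.mem_coe.mpr hb)
    rw [hfb] at this
    exact Finset.mem_coe.mp this
  obtain ⟨h1, h2⟩ := boxOf_spec L hf hi
  exact hf.injOn (Finset.mem_coe.mpr h1) (Finset.mem_coe.mpr hb) (by rw [h2, hfb])

lemma filling_perm (L : MultiPartition r) {f : (Fin r × ℕ × ℕ) → ℕ}
    (hf : L.IsFilling f) {w : Equiv.Perm ℕ} (hw : FixOut L.nb w) :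
    L.IsFilling (fun b => w (f b)) := by
  refine ⟨?_, ?_⟩
  · have hbij : Set.BijOn (w : ℕ → ℕ) ↑(Finset.Icc 1 L.nb) ↑(Finset.Icc 1 L.nb) := by
      refine ⟨?_, w.injective.injOn, ?_⟩
      · intro m hm
        exact Finset.mem_coe.mpr (hw.mem (Finset.mem_coe.mp hm))
      · intro y hy
        exact ⟨w⁻¹ y, Finset.mem_coe.mpr (hw.inv.mem (Finset.mem_coe.mp hy)),
          w.apply_symm_apply y⟩
    exact hbij.comp hf.1
  · intro b hb
    show w (f b) = 0
    rw [hf.2 b hb]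
    exact hw 0 (by simp)

lemma key [NeZero r] (L : MultiPartition r) (T : (Fin r × ℕ × ℕ) → ℕ)
    (hT : T ∈ L.SYT) (hstd : L.HasStdAlphabet T) :
    ∀ l : List ℕ, IsSnWord L.nb l → invNum L.nb (wordProd l) = l.length →
    (∀ (k : Fin r) (a b : ℕ), a ∈ L.stdBlock k → b ∈ L.stdBlock k → a < b →
      wordProd l a < wordProd l b) →
    (fun b => wordProd l (T b)) ∈ L.SYT ∧
      L.wreathWord l (L.vOf T) = L.vOf fun b => wordProd l (T b) := by
  intro l
  induction l with
  | nil =>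
    intro _ _ _
    have he : (fun b => wordProd [] (T b)) = T := by
      funext b; rw [wordProd_nil]; rfl
    rw [he]
    exact ⟨hT, rfl⟩
  | cons j l ih =>
    intro hsn hstrict hblk
    obtain ⟨hj1, hj2⟩ := hsn j (by simp)
    have htl : IsSnWord L.nb l := fun i hi => hsn i (by simp [hi])
    set w' := wordProd l with hw'def
    set w := wordProd (j :: l) with hwdef
    have hwc : w = Equiv.swap j (j + 1) * w' := wordProd_cons j l
    have hw'fix : FixOut L.nb w' := fixOut_wordProd htl
    have hlen' : invNum L.nb w' ≤ l.length := invNum_wordProd_le htl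
    have hne : w'⁻¹ j ≠ w'⁻¹ (j + 1) := fun he => by
      have := w'⁻¹.injective he; omega
    have hstep : w'⁻¹ j < w'⁻¹ (j + 1) := by
      rcases lt_or_gt_of_ne hne with hlt | hgt
      · exact hlt
      · exfalso
        have hwfix : FixOut L.nb w := by
          rw [hwc]; exact (FixOut.swap hj1 hj2).mul hw'fix
        have hd : w⁻¹ j < w⁻¹ (j + 1) := by
          rw [hwc, inv_swap_mul, inv_swap_mul, Equiv.swap_apply_left,
            Equiv.swap_apply_right]
          exact hgt
        have h2 := invNum_swap_mul hwfix hj1 hj2 hd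
        have h3 : Equiv.swap j (j + 1) * w = w' := by rw [hwc, swap_swap_cancel]
        rw [h3] at h2
        simp only [List.length_cons] at hstrict
        omega
    have hstrict' : invNum L.nb w' = l.length := by
      have h2 := invNum_swap_mul hw'fix hj1 hj2 hstep
      rw [← hwc] at h2
      simp only [List.length_cons] at hstrict
      omega
    have hsw : ∀ x, w' x = Equiv.swap j (j + 1) (w x) := by
      intro x
      rw [hwc, Equiv.Perm.mul_apply, Equiv.swap_apply_self]
    have e1 : w'⁻¹ j = w⁻¹ (j + 1) := by
      rw [hwc, inv_swap_mul, Equiv.swap_apply_right]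
    have e2 : w'⁻¹ (j + 1) = w⁻¹ j := by
      rw [hwc, inv_swap_mul, Equiv.swap_apply_left]
    have hblk' : ∀ (k : Fin r) (a b : ℕ), a ∈ L.stdBlock k → b ∈ L.stdBlock k →
        a < b → w' a < w' b := by
      intro k a b ha hb hab
      have hwab := hblk k a b ha hb hab
      rw [hsw a, hsw b]
      apply swap_succ_lt hwab
      rintro ⟨h1, h2⟩
      have ha' : a = w⁻¹ j := by rw [← h1, Equiv.Perm.coe_inv, Equiv.symm_apply_apply]
      have hb' : b = w⁻¹ (j + 1) := by rw [← h2, Equiv.Perm.coe_inv, Equiv.symm_apply_apply]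
      rw [e1, e2] at hstep
      omega
    obtain ⟨hSm, heq⟩ := ih htl hstrict' hblk'
    set S' : (Fin r × ℕ × ℕ) → ℕ := fun b => w' (T b) with hS'def
    have hfS' : Set.BijOn S' ↑L.cells ↑(Finset.Icc 1 L.nb) := hSm.1.1
    have hfT : Set.BijOn T ↑L.cells ↑(Finset.Icc 1 L.nb) := hT.1.1
    have hjm : j ∈ Finset.Icc 1 L.nb := by simp; omega
    have hjm1 : j + 1 ∈ Finset.Icc 1 L.nb := by simp; omega
    have hp : w'⁻¹ j ∈ Finset.Icc 1 L.nb := hw'fix.inv.mem hjm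
    have hq : w'⁻¹ (j + 1) ∈ Finset.Icc 1 L.nb := hw'fix.inv.mem hjm1
    obtain ⟨hcp, hvp⟩ := boxOf_spec L hfT hp
    obtain ⟨hcq, hvq⟩ := boxOf_spec L hfT hq
    have hbp : L.boxOf S' j = L.boxOf T (w'⁻¹ j) :=
      boxOf_eq L hfS' hcp (by show w' (T _) = j; rw [hvp, Equiv.Perm.coe_inv, Equiv.apply_symm_apply])
    have hbq : L.boxOf S' (j + 1) = L.boxOf T (w'⁻¹ (j + 1)) :=
      boxOf_eq L hfS' hcq (by show w' (T _) = j + 1; rw [hvq, Equiv.Perm.coe_inv, Equiv.apply_symm_apply])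
    have hcomp : (L.boxOf S' j).1 ≠ (L.boxOf S' (j + 1)).1 := by
      rw [hbp, hbq]
      intro hk
      have hstdp := hstd _ hcp
      have hstdq := hstd _ hcq
      rw [hvp, hk] at hstdp
      rw [hvq] at hstdq
      have hx := hblk _ _ _ hstdp hstdq hstep
      have f1 : w (w'⁻¹ j) = j + 1 := by
        rw [hwc, Equiv.Perm.mul_apply, Equiv.Perm.coe_inv, Equiv.apply_symm_apply, Equiv.swap_apply_left]
      have f2 : w (w'⁻¹ (j + 1)) = j := by
        rw [hwc, Equiv.Perm.mul_apply, Equiv.Perm.coe_inv, Equiv.apply_symm_apply, Equiv.swap_apply_right]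
      rw [f1, f2] at hx
      omega
    have hSw : (fun b => w (T b)) = sApplyR j S' := by
      funext b
      show w (T b) = Equiv.swap j (j + 1) (S' b)
      rw [hwc, Equiv.Perm.mul_apply]
    have hSYT : sApplyR j S' ∈ L.SYT := by
      refine ⟨?_, ?_, ?_⟩
      · exact filling_perm L hSm.1 (FixOut.swap hj1 hj2)
      · intro k x y h1 h2
        have hlt := hSm.2.1 k x y h1 h2
        show Equiv.swap j (j + 1) (S' (k, (x, y))) < Equiv.swap j (j + 1) (S' (k, (x, y + 1)))
        apply swap_succ_lt hlt
        rintro ⟨g1, g2⟩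
        apply hcomp
        have hc1 : L.boxOf S' j = (k, (x, y)) := boxOf_eq L hfS' h1 g1
        have hc2 : L.boxOf S' (j + 1) = (k, (x, y + 1)) := boxOf_eq L hfS' h2 g2
        rw [hc1, hc2]
      · intro k x y h1 h2
        have hlt := hSm.2.2 k x y h1 h2
        show Equiv.swap j (j + 1) (S' (k, (x, y))) < Equiv.swap j (j + 1) (S' (k, (x + 1, y)))
        apply swap_succ_lt hlt
        rintro ⟨g1, g2⟩
        apply hcomp
        have hc1 : L.boxOf S' j = (k, (x, y)) := boxOf_eq L hfS' h1 g1
        have hc2 : L.boxOf S' (j + 1) = (k, (x + 1, y)) := boxOf_eq L hfS' h2 g2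
        rw [hc1, hc2]
    have hop : L.wreathOp j (L.vOf S') = L.vOf (sApplyR j S') := by
      rw [MultiPartition.vOf, dif_pos hSm]
      simp only [MultiPartition.wreathOp]
      erw [Finsupp.lsum_single]
      simp only [
        LinearMap.toSpanSingleton_apply, one_smul]
      rw [if_neg hcomp]
    refine ⟨?_, ?_⟩
    · rw [hSw]; exact hSYT
    · show (L.wreathOp j ∘ₗ L.wreathWord l) (L.vOf T) = _
      rw [LinearMap.comp_apply, heq, hop, hSw]

end AuxTab


/-- **Lemma (alphabetizer action).**
Let `λ̲` be an `r`-partition of `n`, let `T ∈ SYT(λ̲)` have the standard alphabet, and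
let `β ∈ S_n` be the alphabetizer of some `λ̲`-alphabet.  Then `β(T)` is a standard
`r`-tableau, and for every reduced word `β = s_{j_1} ⋯ s_{j_m}` one has
`(σ_{j_1} ∘ ⋯ ∘ σ_{j_m})(v_T) = v_{β(T)}` in the seminormal module of shape `λ̲`. -/
theorem alphabetizer_acts_on_seminormal_basis
    {r : ℕ} [NeZero r] (L : MultiPartition r)
    (T : (Fin r × ℕ × ℕ) → ℕ) (hT : T ∈ L.SYT) (hstd : L.HasStdAlphabet T)
    (A : Fin r → Finset ℕ) (hA : L.IsAlphabet A)
    (β : Equiv.Perm ℕ) (hβ : L.IsAlphabetizer A β)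
    (l : List ℕ) (hl : IsReducedWord L.nb β l) :
    (fun b => β (T b)) ∈ L.SYT ∧
    L.wreathWord l (L.vOf T) = L.vOf (fun b => β (T b)) := by
  have hstrict := AuxPerm.reduced_invNum hl
  have hblk : ∀ (k : Fin r) (a b : ℕ), a ∈ L.stdBlock k → b ∈ L.stdBlock k → a < b →
      wordProd l a < wordProd l b := by
    intro k a b ha hb hab
    rw [hl.2.1]
    exact (hβ.2 k).2 a b ha hb hab
  have h := AuxTab.key L T hT hstd l hl.1 hstrict hblk
  rw [hl.2.1] at h
  exact h
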